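/- In a weak model category, given morphisms f, g: A → X with A cofibrant and X fibrant, the following are equivalent: (a) there exists a cylinder (j⁻, j⁺): A ⊔ A ↪ IA and h: IA → X with f = h j⁻ and g = h j⁺; (b) for every cylinder for A there exists such an h; (c) there exists a path object (p⁻, p⁺): PX ↠ X × X and k: A → PX with f = p⁻ k and g = p⁺ k; (d) for every path object for X there exists such a k. -/

import Mathlib

open CategoryTheory Limits

universe v u

variable (C : Type u) [Category.{v} C] [HasFiniteLimits C] [HasFiniteColimits C]

/-- A weak model structure in the sense of Henry: classes of cofibrations and fibrations
(cofibrations have cofibrant domains, fibrations have fibrant codomains; each class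
contains isomorphisms between cofibrant resp. fibrant objects, is closed under
composition, and is stable under pushout resp. pullback), together with the
factorisation axiom, the relative strong cylinder axiom, and the relative strong
path object axiom.  Acyclic (co)fibrations are the (co)fibrations with the
(left/right) lifting property against all (fibrations/cofibrations). -/
structure WeakModelStructure where
  Cof : MorphismProperty C
  Fib : MorphismProperty C
  cof_bot : Cof (initial.to (⊥_ C))
  cof_dom : ∀ {A B : C} (i : A ⟶ B), Cof i → Cof (initial.to A)
  cof_iso : ∀ {A B : C} (e : A ⟶ B), IsIso e → Cof (initial.to A) → Cof e
  cof_comp : ∀ {A B D : C} (i : A ⟶ B) (j : B ⟶ D), Cof i → Cof j → Cof (i ≫ j)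
  cof_pushout : ∀ {A B D : C} (i : A ⟶ B) (f : A ⟶ D), Cof i → Cof (initial.to D) →
    Cof (pushout.inr i f)
  fib_top : Fib (terminal.from (⊤_ C))
  fib_cod : ∀ {X Y : C} (p : X ⟶ Y), Fib p → Fib (terminal.from Y)
  fib_iso : ∀ {X Y : C} (e : X ⟶ Y), IsIso e → Fib (terminal.from Y) → Fib e
  fib_comp : ∀ {X Y Z : C} (p : X ⟶ Y) (q : Y ⟶ Z), Fib p → Fib q → Fib (p ≫ q)
  fib_pullback : ∀ {X Y Z : C} (p : X ⟶ Y) (f : Z ⟶ Y), Fib p → Fib (terminal.from Z) →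
    Fib (pullback.fst f p)
  /-- any morphism from a cofibrant object to a fibrant object factors as a cofibration
  followed by an acyclic fibration -/
  fact₁ : ∀ {A X : C} (f : A ⟶ X), Cof (initial.to A) → Fib (terminal.from X) →
    ∃ (Z : C) (i : A ⟶ Z) (p : Z ⟶ X), Cof i ∧
      (Fib p ∧ ∀ ⦃A' B' : C⦄ (j : A' ⟶ B'), Cof j → HasLiftingProperty j p) ∧
      i ≫ p = f
  /-- any morphism from a cofibrant object to a fibrant object factors as an acyclic
  cofibration followed by a fibration -/
  fact₂ : ∀ {A X : C} (f : A ⟶ X), Cof (initial.to A) → Fib (terminal.from X) →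
    ∃ (Z : C) (i : A ⟶ Z) (p : Z ⟶ X),
      (Cof i ∧ ∀ ⦃X' Y' : C⦄ (q : X' ⟶ Y'), Fib q → HasLiftingProperty i q) ∧
      Fib p ∧ i ≫ p = f
  /-- every cofibration with fibrant codomain admits a relative strong cylinder -/
  cylinder_axiom : ∀ {A B : C} (j : A ⟶ B), Cof j → Fib (terminal.from B) →
    ∃ (I : C) (lneg lpos : B ⟶ I) (σ : I ⟶ B) (h : j ≫ lneg = j ≫ lpos),
      Cof (pushout.desc lneg lpos h) ∧
      (Cof lneg ∧ ∀ ⦃X' Y' : C⦄ (q : X' ⟶ Y'), Fib q → HasLiftingProperty lneg q) ∧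
      lneg ≫ σ = 𝟙 B ∧ lpos ≫ σ = 𝟙 B
  /-- every fibration with cofibrant domain admits a relative strong path object -/
  path_axiom : ∀ {A X : C} (p : A ⟶ X), Fib p → Cof (initial.to A) →
    ∃ (P : C) (qneg qpos : P ⟶ A) (σ : A ⟶ P) (h : qneg ≫ p = qpos ≫ p),
      Fib (pullback.lift qneg qpos h) ∧
      (Fib qneg ∧ ∀ ⦃A' B' : C⦄ (i : A' ⟶ B'), Cof i → HasLiftingProperty i qneg) ∧
      σ ≫ qneg = 𝟙 A ∧ σ ≫ qpos = 𝟙 A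


variable {C}

/-- A cylinder for a cofibrant object `A`: a cofibration `(j⁻, j⁺) : A ⊔ A ↪ I` whose
first leg is an acyclic cofibration, such that the codiagonal factors through it up to
an acyclic cofibration `d : A ↪ D`. -/
def IsCylinder (W : WeakModelStructure C) (A I : C) (jneg jpos : A ⟶ I) : Prop :=
  W.Cof (coprod.desc jneg jpos) ∧
    (W.Cof jneg ∧ ∀ ⦃X' Y' : C⦄ (q : X' ⟶ Y'), W.Fib q → HasLiftingProperty jneg q) ∧
    ∃ (D : C) (d : A ⟶ D) (h : I ⟶ D),
      (W.Cof d ∧ ∀ ⦃X' Y' : C⦄ (q : X' ⟶ Y'), W.Fib q → HasLiftingProperty d q) ∧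
      jneg ≫ h = d ∧ jpos ≫ h = d

/-- A path object for a fibrant object `X`: a fibration `(p⁻, p⁺) : P ↠ X × X` whose
first leg is an acyclic fibration, such that the diagonal factors through it up to an
acyclic fibration `t : T ↠ X`. -/
def IsPathObject (W : WeakModelStructure C) (X P : C) (pneg ppos : P ⟶ X) : Prop :=
  W.Fib (prod.lift pneg ppos) ∧
    (W.Fib pneg ∧ ∀ ⦃A' B' : C⦄ (i : A' ⟶ B'), W.Cof i → HasLiftingProperty i pneg) ∧
    ∃ (T : C) (t : T ⟶ X) (k : T ⟶ P),
      (W.Fib t ∧ ∀ ⦃A' B' : C⦄ (i : A' ⟶ B'), W.Cof i → HasLiftingProperty i t) ∧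
      k ≫ pneg = t ∧ k ≫ ppos = t

/-!
Cylinders and path objects exist: factor `A → 1` as an acyclic cofibration `d : A ↪ D` followed by
a fibration, so that `D` is bifibrant, and precompose a strong cylinder of `D` with `d`; dually
for path objects.

A cylinder homotopy `h : I → X` from `f` to `g` turns into a homotopy through any path object
`P ↠ X × X` by lifting `j⁻ : A ↪ I` against `(p⁻, p⁺)`: on top sits the constant path at `f`
(a lift of `f` through the acyclic fibration `T ↠ X` followed by `T → P`), at the bottom the pair
`(r ≫ e, h)`, where `r : I → D` is the contraction of the cylinder and `e : D → X` extends `f`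
along `d = j⁻ ≫ r = j⁺ ≫ r`. Restricting the lift along `j⁺` gives the path homotopy. The
converse lifts `(j⁻, j⁺) : A ⊔ A ↪ I` against `p⁻`, and a fixed cylinder and a fixed path object
connect all four conditions.
-/

attribute [local simp] coprod.inl_desc coprod.inr_desc prod.lift_fst prod.lift_snd
  prod.lift_fst_assoc prod.lift_snd_assoc pushout.inl_desc pushout.inr_desc pullback.lift_fst_assoc
  pullback.lift_snd_assoc

namespace WeakModelStructure

variable (W : WeakModelStructure C)

def AcyclicCof : MorphismProperty C := fun _ _ i =>
  W.Cof i ∧ ∀ ⦃X' Y' : C⦄ (q : X' ⟶ Y'), W.Fib q → HasLiftingProperty i q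

def AcyclicFib : MorphismProperty C := fun _ _ p =>
  W.Fib p ∧ ∀ ⦃A' B' : C⦄ (i : A' ⟶ B'), W.Cof i → HasLiftingProperty i p

lemma cof_initial_to_of_cof {A B : C} {i : A ⟶ B} (hi : W.Cof i) (hA : W.Cof (initial.to A)) :
    W.Cof (initial.to B) := by
  rw [initial.hom_ext (initial.to B) (initial.to A ≫ i)]
  exact W.cof_comp _ _ hA hi

lemma fib_terminal_from_of_fib {X Y : C} {p : X ⟶ Y} (hp : W.Fib p)
    (hY : W.Fib (terminal.from Y)) : W.Fib (terminal.from X) := by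
  rw [terminal.hom_ext (terminal.from X) (p ≫ terminal.from Y)]
  exact W.fib_comp _ _ hp hY

lemma cof_of_isPushout {Z X Y P : C} {i : Z ⟶ X} {f : Z ⟶ Y} {inl : X ⟶ P} {inr : Y ⟶ P}
    (h : IsPushout i f inl inr) (hi : W.Cof i) (hY : W.Cof (initial.to Y)) : W.Cof inr := by
  have hinr := W.cof_pushout i f hi hY
  rw [← h.inr_isoPushout_inv]
  exact W.cof_comp _ _ hinr (W.cof_iso _ inferInstance (W.cof_initial_to_of_cof hinr hY))

lemma fib_of_isPullback {P X Y Z : C} {fst : P ⟶ X} {snd : P ⟶ Y} {f : X ⟶ Z} {g : Y ⟶ Z}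
    (h : IsPullback fst snd f g) (hg : W.Fib g) (hX : W.Fib (terminal.from X)) :
    W.Fib fst := by
  have hfst := W.fib_pullback g f hg hX
  rw [← h.isoPullback_hom_fst]
  exact W.fib_comp _ _ (W.fib_iso _ inferInstance (W.fib_terminal_from_of_fib hfst hX)) hfst

lemma cof_coprod_inl {A B : C} (hA : W.Cof (initial.to A)) (hB : W.Cof (initial.to B)) :
    W.Cof (coprod.inl : A ⟶ A ⨿ B) :=
  W.cof_of_isPushout (IsPushout.of_hasBinaryCoproduct' A B).flip hB hA

lemma cof_initial_to_coprod {A B : C} (hA : W.Cof (initial.to A)) (hB : W.Cof (initial.to B)) :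
    W.Cof (initial.to (A ⨿ B)) :=
  W.cof_initial_to_of_cof (W.cof_coprod_inl hA hB) hA

lemma cof_coprod_map_id {A B : C} {i : A ⟶ B} (hi : W.Cof i) (E : C)
    (hE : W.Cof (initial.to E)) : W.Cof (coprod.map i (𝟙 E)) :=
  W.cof_of_isPushout (IsPushout.of_coprod_inl_with_id i E).flip hi
    (W.cof_initial_to_coprod (W.cof_dom i hi) hE)

lemma cof_coprod_id_map {A B : C} {i : A ⟶ B} (hi : W.Cof i) (E : C)
    (hE : W.Cof (initial.to E)) : W.Cof (coprod.map (𝟙 E) i) := by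
  have hA := W.cof_dom i hi
  have hB := W.cof_initial_to_of_cof hi hA
  rw [show coprod.map (𝟙 E) i =
      (coprod.braiding E A).hom ≫ coprod.map i (𝟙 E) ≫ (coprod.braiding B E).hom by
    ext <;> simp]
  exact W.cof_comp _ _ (W.cof_iso _ inferInstance (W.cof_initial_to_coprod hE hA))
    (W.cof_comp _ _ (W.cof_coprod_map_id hi E hE)
      (W.cof_iso _ inferInstance (W.cof_initial_to_coprod hB hE)))

lemma cof_coprod_map {A B A' B' : C} {i : A ⟶ B} {i' : A' ⟶ B'} (hi : W.Cof i)
    (hi' : W.Cof i') : W.Cof (coprod.map i i') := by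
  rw [show coprod.map i i' = coprod.map i (𝟙 A') ≫ coprod.map (𝟙 B) i' by simp]
  exact W.cof_comp _ _ (W.cof_coprod_map_id hi A' (W.cof_dom i' hi'))
    (W.cof_coprod_id_map hi' B (W.cof_initial_to_of_cof hi (W.cof_dom i hi)))

lemma fib_prod_fst {X Y : C} (hX : W.Fib (terminal.from X)) (hY : W.Fib (terminal.from Y)) :
    W.Fib (prod.fst : X ⨯ Y ⟶ X) :=
  W.fib_of_isPullback (IsPullback.of_hasBinaryProduct' X Y) hY hX

lemma fib_terminal_from_prod {X Y : C} (hX : W.Fib (terminal.from X))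
    (hY : W.Fib (terminal.from Y)) : W.Fib (terminal.from (X ⨯ Y)) :=
  W.fib_terminal_from_of_fib (W.fib_prod_fst hX hY) hX

lemma fib_prod_map_id {X Y : C} {p : X ⟶ Y} (hp : W.Fib p) (hY : W.Fib (terminal.from Y))
    (E : C) (hE : W.Fib (terminal.from E)) : W.Fib (prod.map p (𝟙 E)) :=
  W.fib_of_isPullback (IsPullback.of_prod_fst_with_id p E).flip hp
    (W.fib_terminal_from_prod hY hE)

lemma fib_prod_id_map {X Y : C} {p : X ⟶ Y} (hp : W.Fib p) (hY : W.Fib (terminal.from Y))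
    (E : C) (hE : W.Fib (terminal.from E)) : W.Fib (prod.map (𝟙 E) p) := by
  have hX := W.fib_terminal_from_of_fib hp hY
  rw [show prod.map (𝟙 E) p =
      (prod.braiding E X).hom ≫ prod.map p (𝟙 E) ≫ (prod.braiding Y E).hom by
    ext <;> simp]
  exact W.fib_comp _ _ (W.fib_iso _ inferInstance (W.fib_terminal_from_prod hX hE))
    (W.fib_comp _ _ (W.fib_prod_map_id hp hY E hE)
      (W.fib_iso _ inferInstance (W.fib_terminal_from_prod hE hY)))

lemma fib_prod_map {X Y X' Y' : C} {p : X ⟶ Y} {p' : X' ⟶ Y'} (hp : W.Fib p) (hp' : W.Fib p')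
    (hY : W.Fib (terminal.from Y)) (hY' : W.Fib (terminal.from Y')) :
    W.Fib (prod.map p p') := by
  rw [show prod.map p p' = prod.map p (𝟙 X') ≫ prod.map (𝟙 Y) p' by simp]
  exact W.fib_comp _ _ (W.fib_prod_map_id hp hY X' (W.fib_terminal_from_of_fib hp' hY'))
    (W.fib_prod_id_map hp' hY' Y hY)

variable {W}

lemma AcyclicCof.comp {A B D : C} {i : A ⟶ B} {j : B ⟶ D} (hi : W.AcyclicCof i)
    (hj : W.AcyclicCof j) : W.AcyclicCof (i ≫ j) := by
  refine ⟨W.cof_comp i j hi.1 hj.1, fun X' Y' q hq => ?_⟩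
  have := hi.2 q hq
  have := hj.2 q hq
  infer_instance

lemma AcyclicFib.comp {X Y Z : C} {p : X ⟶ Y} {q : Y ⟶ Z} (hp : W.AcyclicFib p)
    (hq : W.AcyclicFib q) : W.AcyclicFib (p ≫ q) := by
  refine ⟨W.fib_comp p q hp.1 hq.1, fun A' B' i hi => ?_⟩
  have := hp.2 i hi
  have := hq.2 i hi
  infer_instance

lemma AcyclicFib.exists_lift {T X : C} {t : T ⟶ X} (ht : W.AcyclicFib t) {A : C}
    (hA : W.Cof (initial.to A)) (f : A ⟶ X) : ∃ l : A ⟶ T, l ≫ t = f := by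
  have := ht.2 _ hA
  have sq : CommSq (initial.to T) (initial.to A) t f := ⟨initial.hom_ext _ _⟩
  exact ⟨sq.lift, sq.fac_right⟩

lemma AcyclicCof.exists_extension {A D : C} {d : A ⟶ D} (hd : W.AcyclicCof d) {X : C}
    (hX : W.Fib (terminal.from X)) (f : A ⟶ X) : ∃ e : D ⟶ X, d ≫ e = f := by
  have := hd.2 _ hX
  have sq : CommSq f d (terminal.from X) (terminal.from D) := ⟨terminal.hom_ext _ _⟩
  exact ⟨sq.lift, sq.fac_left⟩

variable (W)

lemma exists_isCylinder {A : C} (hA : W.Cof (initial.to A)) :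
    ∃ (I : C) (jneg jpos : A ⟶ I), IsCylinder W A I jneg jpos := by
  obtain ⟨D, d, p, hd, hp, -⟩ := W.fact₂ (terminal.from A) hA W.fib_top
  have hDfib : W.Fib (terminal.from D) := by rwa [terminal.hom_ext (terminal.from D) p]
  have hDcof := W.cof_initial_to_of_cof hd.1 hA
  obtain ⟨I, lneg, lpos, σ, hl, hdesc, hlneg, hσneg, hσpos⟩ :=
    W.cylinder_axiom (initial.to D) hDcof hDfib
  have hcodiag : coprod.desc (d ≫ lneg) (d ≫ lpos) =
      coprod.map d d ≫ (coprodIsoPushout D D).hom ≫ pushout.desc lneg lpos hl := by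
    ext <;> simp
  refine ⟨I, d ≫ lneg, d ≫ lpos, ?_, AcyclicCof.comp hd hlneg, D, d, σ, hd, ?_, ?_⟩
  · rw [hcodiag]
    exact W.cof_comp _ _ (W.cof_coprod_map hd.1 hd.1) (W.cof_comp _ _
      (W.cof_iso _ inferInstance (W.cof_initial_to_coprod hDcof hDcof)) hdesc)
  · rw [Category.assoc, hσneg, Category.comp_id]
  · rw [Category.assoc, hσpos, Category.comp_id]

lemma exists_isPathObject {X : C} (hX : W.Fib (terminal.from X)) :
    ∃ (P : C) (pneg ppos : P ⟶ X), IsPathObject W X P pneg ppos := by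
  obtain ⟨T, i, t, hi, ht, -⟩ := W.fact₁ (initial.to X) W.cof_bot hX
  have hTcof : W.Cof (initial.to T) := by rwa [initial.hom_ext (initial.to T) i]
  have hTfib := W.fib_terminal_from_of_fib ht.1 hX
  obtain ⟨P, qneg, qpos, σ, hq, hlift, hqneg, hσneg, hσpos⟩ :=
    W.path_axiom (terminal.from T) hTfib hTcof
  have hdiag : prod.lift (qneg ≫ t) (qpos ≫ t) =
      pullback.lift qneg qpos hq ≫ (prodIsoPullback T T).inv ≫ prod.map t t := by
    ext <;> simp
  refine ⟨P, qneg ≫ t, qpos ≫ t, ?_, AcyclicFib.comp hqneg ht, T, t, σ, ht, ?_, ?_⟩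
  · rw [hdiag]
    exact W.fib_comp _ _ hlift (W.fib_comp _ _
      (W.fib_iso _ inferInstance (W.fib_terminal_from_prod hTfib hTfib))
      (W.fib_prod_map ht.1 ht.1 hX hX))
  · rw [← Category.assoc, hσneg, Category.id_comp]
  · rw [← Category.assoc, hσpos, Category.id_comp]

lemma exists_pathHomotopy_of_cylinderHomotopy {A X : C} (hA : W.Cof (initial.to A))
    (hX : W.Fib (terminal.from X)) {f g : A ⟶ X} {I : C} {jneg jpos : A ⟶ I}
    (hI : IsCylinder W A I jneg jpos) {h : I ⟶ X} (hf : jneg ≫ h = f) (hg : jpos ≫ h = g)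
    {P : C} {pneg ppos : P ⟶ X} (hP : IsPathObject W X P pneg ppos) :
    ∃ k : A ⟶ P, k ≫ pneg = f ∧ k ≫ ppos = g := by
  obtain ⟨-, hjneg, D, d, r, hd, hdneg, hdpos⟩ := hI
  obtain ⟨hp, -, T, t, s, ht, hsneg, hspos⟩ := hP
  obtain ⟨l, hl⟩ := AcyclicFib.exists_lift ht hA f
  obtain ⟨e, he⟩ := AcyclicCof.exists_extension hd hX f
  have := hjneg.2 _ hp
  have sq : CommSq (l ≫ s) jneg (prod.lift pneg ppos) (prod.lift (r ≫ e) h) :=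
    ⟨by ext <;> simp [hsneg, hspos, hl, reassoc_of% hdneg, he, hf]⟩
  refine ⟨jpos ≫ sq.lift, ?_, ?_⟩
  · simpa [reassoc_of% hdpos, he] using jpos ≫= sq.fac_right =≫ prod.fst
  · simpa [hg] using jpos ≫= sq.fac_right =≫ prod.snd

lemma exists_cylinderHomotopy_of_pathHomotopy {A X : C} (hA : W.Cof (initial.to A))
    (hX : W.Fib (terminal.from X)) {f g : A ⟶ X} {P : C} {pneg ppos : P ⟶ X}
    (hP : IsPathObject W X P pneg ppos) {k : A ⟶ P} (hf : k ≫ pneg = f) (hg : k ≫ ppos = g)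
    {I : C} {jneg jpos : A ⟶ I} (hI : IsCylinder W A I jneg jpos) :
    ∃ h : I ⟶ X, jneg ≫ h = f ∧ jpos ≫ h = g := by
  obtain ⟨hj, -, D, d, r, hd, hdneg, hdpos⟩ := hI
  obtain ⟨-, hpneg, T, t, s, ht, hsneg, hspos⟩ := hP
  obtain ⟨l, hl⟩ := AcyclicFib.exists_lift ht hA f
  obtain ⟨e, he⟩ := AcyclicCof.exists_extension hd hX f
  have := hpneg.2 _ hj
  have sq : CommSq (coprod.desc (l ≫ s) k) (coprod.desc jneg jpos) pneg (r ≫ e) :=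
    ⟨by ext <;> simp [hsneg, hl, reassoc_of% hdneg, reassoc_of% hdpos, he, hf]⟩
  refine ⟨sq.lift ≫ ppos, ?_, ?_⟩
  · have hneg : jneg ≫ sq.lift = l ≫ s := by
      simpa only [coprod.inl_desc_assoc, coprod.inl_desc] using coprod.inl ≫= sq.fac_left
    rw [reassoc_of% hneg, hspos, hl]
  · have hpos : jpos ≫ sq.lift = k := by
      simpa only [coprod.inr_desc_assoc, coprod.inr_desc] using coprod.inr ≫= sq.fac_left
    rw [reassoc_of% hpos, hg]

end WeakModelStructure

/-- in a weak model category, for `f g : A ⟶ X` with `A` cofibrant and `X`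
fibrant, the following are equivalent: (a) `f` and `g` are homotopic via some cylinder;
(b) they are homotopic via every cylinder; (c) they are homotopic via some path object;
(d) they are homotopic via every path object. -/
theorem stmt7 (W : WeakModelStructure C) {A X : C}
    (hA : W.Cof (initial.to A)) (hX : W.Fib (terminal.from X)) (f g : A ⟶ X) :
    ((∃ (I : C) (jneg jpos : A ⟶ I), IsCylinder W A I jneg jpos ∧
        ∃ h : I ⟶ X, jneg ≫ h = f ∧ jpos ≫ h = g) ↔
      (∀ (I : C) (jneg jpos : A ⟶ I), IsCylinder W A I jneg jpos →
        ∃ h : I ⟶ X, jneg ≫ h = f ∧ jpos ≫ h = g)) ∧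
    ((∃ (I : C) (jneg jpos : A ⟶ I), IsCylinder W A I jneg jpos ∧
        ∃ h : I ⟶ X, jneg ≫ h = f ∧ jpos ≫ h = g) ↔
      (∃ (P : C) (pneg ppos : P ⟶ X), IsPathObject W X P pneg ppos ∧
        ∃ k : A ⟶ P, k ≫ pneg = f ∧ k ≫ ppos = g)) ∧
    ((∃ (P : C) (pneg ppos : P ⟶ X), IsPathObject W X P pneg ppos ∧
        ∃ k : A ⟶ P, k ≫ pneg = f ∧ k ≫ ppos = g) ↔
      (∀ (P : C) (pneg ppos : P ⟶ X), IsPathObject W X P pneg ppos →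
        ∃ k : A ⟶ P, k ≫ pneg = f ∧ k ≫ ppos = g)) := by
  obtain ⟨I₀, jneg₀, jpos₀, hI₀⟩ := W.exists_isCylinder hA
  obtain ⟨P₀, pneg₀, ppos₀, hP₀⟩ := W.exists_isPathObject hX
  refine ⟨⟨?_, fun H => ⟨I₀, jneg₀, jpos₀, hI₀, H _ _ _ hI₀⟩⟩,
    ⟨?_, ?_⟩, ⟨?_, fun H => ⟨P₀, pneg₀, ppos₀, hP₀, H _ _ _ hP₀⟩⟩⟩
  · rintro ⟨I, jneg, jpos, hI, h, hf, hg⟩ I' jneg' jpos' hI'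
    obtain ⟨k, hkf, hkg⟩ := W.exists_pathHomotopy_of_cylinderHomotopy hA hX hI hf hg hP₀
    exact W.exists_cylinderHomotopy_of_pathHomotopy hA hX hP₀ hkf hkg hI'
  · rintro ⟨I, jneg, jpos, hI, h, hf, hg⟩
    exact ⟨P₀, pneg₀, ppos₀, hP₀,
      W.exists_pathHomotopy_of_cylinderHomotopy hA hX hI hf hg hP₀⟩
  · rintro ⟨P, pneg, ppos, hP, k, hkf, hkg⟩
    exact ⟨I₀, jneg₀, jpos₀, hI₀,
      W.exists_cylinderHomotopy_of_pathHomotopy hA hX hP hkf hkg hI₀⟩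
  · rintro ⟨P, pneg, ppos, hP, k, hkf, hkg⟩ P' pneg' ppos' hP'
    obtain ⟨h, hf, hg⟩ := W.exists_cylinderHomotopy_of_pathHomotopy hA hX hP hkf hkg hI₀
    exact W.exists_pathHomotopy_of_cylinderHomotopy hA hX hI₀ hf hg hP'
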